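/- arXiv:2510.17648 — 3 statements merged into one kernel-verified Lean document; each statement's English description precedes it below -/
import Mathlib

section
/- Let (E, ℰ) be a measurable space, 𝓕 a class of measurable functions E → ℝ with envelope F. For a block B = (x₁,…,x_k) ∈ E^k define the occupation sum f̌(B) = Σ_{t=1}^k f(x_t), and let ℓ(B) = k. Let Ř be a probability measure on the torus Ě = ⋃_k E^k with Ř(ℓ) < ∞, and define the measure R on E by R(A) = (1/Ř(ℓ)) ∫_Ě M(B,A) Ř(dB), where M(B,·) = Σ_t δ_{x_t}. Then for every 0 < ε ≤ 1, the L¹(Ř)-covering number of 𝓕̌ = {f̌ : f ∈ 𝓕} at radius ε‖F̌‖_{Ř,1} is at most the L¹(R)-covering number of 𝓕 at radius ε‖F‖_{R,1}. -/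
open MeasureTheory
open scoped ENNReal

section AuxStmt5

lemma stmt5_measurable_sigma {α : Type*} {β : α → Type*} {γ : Type*}
    [∀ a, MeasurableSpace (β a)] [MeasurableSpace γ] {f : Sigma β → γ}
    (h : ∀ a, Measurable fun b => f ⟨a, b⟩) : Measurable f := by
  intro s hs
  exact MeasurableSpace.measurableSet_iInf.2 fun a => h a hs

variable {E : Type*} [MeasurableSpace E]

lemma stmt5_meas_blocksum {h : E → ℝ≥0∞} (hh : Measurable h) :
    Measurable fun B : (k : ℕ) × (Fin (k + 1) → E) => ∑ t : Fin (B.1 + 1), h (B.2 t) := by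
  apply stmt5_measurable_sigma
  intro k
  show Measurable fun b : Fin (k + 1) → E => ∑ t : Fin (k + 1), h (b t)
  exact Finset.measurable_sum _ fun t _ => hh.comp (measurable_pi_apply t)

lemma stmt5_meas_blocksum_real {h : E → ℝ} (hh : Measurable h) :
    Measurable fun B : (k : ℕ) × (Fin (k + 1) → E) => ∑ t : Fin (B.1 + 1), h (B.2 t) := by
  apply stmt5_measurable_sigma
  intro k
  show Measurable fun b : Fin (k + 1) → E => ∑ t : Fin (k + 1), h (b t)
  exact Finset.measurable_sum _ fun t _ => hh.comp (measurable_pi_apply t)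

lemma stmt5_kappa_meas : Measurable fun B : (k : ℕ) × (Fin (k + 1) → E) =>
    (∑ t : Fin (B.1 + 1), Measure.dirac (B.2 t) : Measure E) := by
  apply Measure.measurable_measure.2
  intro s hs
  have : ∀ B : (k : ℕ) × (Fin (k + 1) → E),
      (∑ t : Fin (B.1 + 1), Measure.dirac (B.2 t) : Measure E) s
      = ∑ t : Fin (B.1 + 1), s.indicator (fun _ => (1:ℝ≥0∞)) (B.2 t) := by
    intro B
    rw [Measure.finset_sum_apply]
    exact Finset.sum_congr rfl fun t _ => Measure.dirac_apply' _ hs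
  simp_rw [this]
  exact stmt5_meas_blocksum ((measurable_one).indicator hs)

/-- Key lemma: the occupation-sum lintegral identity. -/
lemma stmt5_lintegral_blocksum
    (Rcheck : Measure ((k : ℕ) × (Fin (k + 1) → E))) [IsProbabilityMeasure Rcheck]
    (hlen : (∫⁻ B, ((B.1 : ENNReal) + 1) ∂ Rcheck) < ⊤)
    (R : Measure E)
    (hR : ∀ A : Set E, MeasurableSet A →
      R A = (∫⁻ B, (∑ t : Fin (B.1 + 1), A.indicator (fun _ => (1 : ENNReal)) (B.2 t)) ∂ Rcheck) /
              (∫⁻ B, ((B.1 : ENNReal) + 1) ∂ Rcheck))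
    {h : E → ℝ≥0∞} (hh : Measurable h) :
    ∫⁻ B, ∑ t : Fin (B.1 + 1), h (B.2 t) ∂ Rcheck
      = (∫⁻ B, ((B.1 : ENNReal) + 1) ∂ Rcheck) * ∫⁻ x, h x ∂ R := by
  set c := ∫⁻ B, ((B.1 : ENNReal) + 1) ∂ Rcheck with hc
  have hc1 : 1 ≤ c := by
    rw [hc]
    calc (1:ℝ≥0∞) = ∫⁻ _, 1 ∂ Rcheck := by simp
    _ ≤ _ := lintegral_mono fun B => by simp
  have hc0 : c ≠ 0 := fun h0 => by simp [h0] at hc1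
  have hct : c ≠ ⊤ := hlen.ne
  set κ : ((k : ℕ) × (Fin (k + 1) → E)) → Measure E :=
    fun B => ∑ t : Fin (B.1 + 1), Measure.dirac (B.2 t) with hκ
  have hκm : Measurable κ := stmt5_kappa_meas
  have hbind : Rcheck.bind κ = c • R := by
    ext A hA
    rw [Measure.bind_apply hA hκm.aemeasurable]
    have : ∀ B : (k : ℕ) × (Fin (k + 1) → E),
        κ B A = ∑ t : Fin (B.1 + 1), A.indicator (fun _ => (1:ℝ≥0∞)) (B.2 t) := by
      intro B
      rw [hκ, Measure.finset_sum_apply]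
      exact Finset.sum_congr rfl fun t _ => Measure.dirac_apply' _ hA
    simp_rw [this]
    rw [Measure.smul_apply, hR A hA, smul_eq_mul, ENNReal.mul_div_cancel' (fun h0 => absurd h0 hc0) (fun h0 => absurd h0 hct)]
  have h1 : ∫⁻ x, h x ∂(Rcheck.bind κ) = ∫⁻ B, ∫⁻ x, h x ∂(κ B) ∂ Rcheck :=
    Measure.lintegral_bind hκm.aemeasurable hh.aemeasurable
  have h2 : ∀ B : (k : ℕ) × (Fin (k + 1) → E),
      ∫⁻ x, h x ∂(κ B) = ∑ t : Fin (B.1 + 1), h (B.2 t) := by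
    intro B
    rw [hκ, lintegral_finset_sum_measure]
    exact Finset.sum_congr rfl fun t _ => lintegral_dirac' _ hh
  calc ∫⁻ B, ∑ t : Fin (B.1 + 1), h (B.2 t) ∂ Rcheck
      = ∫⁻ x, h x ∂(Rcheck.bind κ) := by rw [h1]; exact (lintegral_congr h2).symm
    _ = ∫⁻ x, h x ∂(c • R) := by rw [hbind]
    _ = c * ∫⁻ x, h x ∂ R := lintegral_smul_measure c _

end AuxStmt5

/-- Covering-number comparison for occupation sums over random blocks: if `𝓕` admits an
`L¹(R)`-net of cardinality `n` at radius `ε‖F‖_{R,1}`, where `R` is obtained from the block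
measure `Ř` via the occupation measure, then `𝓕̌ = {f̌ : f ∈ 𝓕}` admits an `L¹(Ř)`-net of
cardinality `n` at radius `ε‖F̌‖_{Ř,1}`. -/
theorem stmt5 {E : Type*} [MeasurableSpace E]
    (𝓕 : Set (E → ℝ)) (F : E → ℝ) (hFm : Measurable F) (hF0 : ∀ x, 0 ≤ F x)
    (henv : ∀ f ∈ 𝓕, ∀ x, |f x| ≤ F x) (hmeas : ∀ f ∈ 𝓕, Measurable f)
    (Rcheck : Measure ((k : ℕ) × (Fin (k + 1) → E))) [IsProbabilityMeasure Rcheck]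
    (hlen : (∫⁻ B, ((B.1 : ENNReal) + 1) ∂ Rcheck) < ⊤)
    (R : Measure E)
    (hR : ∀ A : Set E, MeasurableSet A →
      R A = (∫⁻ B, (∑ t : Fin (B.1 + 1), A.indicator (fun _ => (1 : ENNReal)) (B.2 t)) ∂ Rcheck) /
              (∫⁻ B, ((B.1 : ENNReal) + 1) ∂ Rcheck))
    (hFint : Integrable F R)
    (ε : ℝ) (hε : 0 < ε) (hε1 : ε ≤ 1) (n : ℕ)
    (hnet : ∃ T : Finset (E → ℝ), T.card ≤ n ∧ (∀ g ∈ T, Measurable g) ∧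
      ∀ f ∈ 𝓕, ∃ g ∈ T, ∫ x, |f x - g x| ∂ R ≤ ε * ∫ x, F x ∂ R) :
    ∃ Tcheck : Finset (((k : ℕ) × (Fin (k + 1) → E)) → ℝ), Tcheck.card ≤ n ∧
      ∀ f ∈ 𝓕, ∃ gc ∈ Tcheck,
        ∫ B, |(∑ t : Fin (B.1 + 1), f (B.2 t)) - gc B| ∂ Rcheck ≤
          ε * ∫ B, (∑ t : Fin (B.1 + 1), F (B.2 t)) ∂ Rcheck := by
  classical
  obtain ⟨T, hTcard, hTmeas, hTnet⟩ := hnet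
  set c := ∫⁻ B, ((B.1 : ENNReal) + 1) ∂ Rcheck with hc
  have hc1 : 1 ≤ c := by
    rw [hc]
    calc (1:ℝ≥0∞) = ∫⁻ _, 1 ∂ Rcheck := by simp
    _ ≤ _ := lintegral_mono fun B => by simp
  have hc0 : c ≠ 0 := fun h0 => by simp [h0] at hc1
  have hct : c ≠ ⊤ := hlen.ne
  have key : ∀ {h : E → ℝ≥0∞}, Measurable h →
      ∫⁻ B, ∑ t : Fin (B.1 + 1), h (B.2 t) ∂ Rcheck = c * ∫⁻ x, h x ∂ R :=
    fun hh => stmt5_lintegral_blocksum Rcheck hlen R hR hh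
  -- Bochner version for nonnegative integrands
  have keyR : ∀ (ψ : E → ℝ), Measurable ψ → (∀ x, 0 ≤ ψ x) →
      ∫ B, (∑ t : Fin (B.1 + 1), ψ (B.2 t)) ∂ Rcheck = c.toReal * ∫ x, ψ x ∂ R := by
    intro ψ hm h0
    rw [integral_eq_lintegral_of_nonneg_ae
        (ae_of_all _ fun B => Finset.sum_nonneg fun t _ => h0 _)
        (stmt5_meas_blocksum_real hm).aestronglyMeasurable,
      integral_eq_lintegral_of_nonneg_ae (ae_of_all _ h0) hm.aestronglyMeasurable]
    have hsum : ∀ B : (k : ℕ) × (Fin (k + 1) → E),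
        ENNReal.ofReal (∑ t : Fin (B.1 + 1), ψ (B.2 t))
          = ∑ t : Fin (B.1 + 1), ENNReal.ofReal (ψ (B.2 t)) :=
      fun B => ENNReal.ofReal_sum_of_nonneg fun t _ => h0 _
    simp_rw [hsum]
    rw [key hm.ennreal_ofReal, ENNReal.toReal_mul]
  have hFsum : ∫ B, (∑ t : Fin (B.1 + 1), F (B.2 t)) ∂ Rcheck = c.toReal * ∫ x, F x ∂ R :=
    keyR F hFm hF0
  have hK : (∫⁻ x, ENNReal.ofReal (F x) ∂ R) ≠ ⊤ := by
    have := hFint.2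
    rw [HasFiniteIntegral] at this
    refine ne_of_lt (lt_of_le_of_lt (le_of_eq ?_) this)
    apply lintegral_congr
    intro x
    rw [← ofReal_norm, Real.norm_eq_abs, abs_of_nonneg (hF0 x)]
  -- the net for occupation sums
  set Φ : (E → ℝ) → (((k : ℕ) × (Fin (k + 1) → E)) → ℝ) := fun g =>
    if Integrable g R then (fun B => ∑ t : Fin (B.1 + 1), g (B.2 t))
    else (fun B => ∑ t : Fin (B.1 + 1), |g (B.2 t)|) with hΦdef
  refine ⟨T.image Φ, le_trans Finset.card_image_le hTcard, ?_⟩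
  intro f hf
  obtain ⟨g, hgT, hgb⟩ := hTnet f hf
  refine ⟨Φ g, Finset.mem_image_of_mem Φ hgT, ?_⟩
  have hfm := hmeas f hf
  have hgm := hTmeas g hgT
  have hfint : Integrable f R := hFint.mono' hfm.aestronglyMeasurable
    (ae_of_all _ fun x => by rw [Real.norm_eq_abs]; exact henv f hf x)
  rw [hFsum]
  by_cases hgi : Integrable g R
  · -- g is integrable: use the ℓ¹ computation
    have hΦ : Φ g = fun B : (k : ℕ) × (Fin (k + 1) → E) => ∑ t : Fin (B.1 + 1), g (B.2 t) := by
      rw [hΦdef]; exact if_pos hgi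
    rw [hΦ]
    have hφm : Measurable fun x => |f x - g x| := (hfm.sub hgm).abs
    have hφint : Integrable (fun x => |f x - g x|) R := (hfint.sub hgi).abs
    have hL : (∫⁻ x, ENNReal.ofReal |f x - g x| ∂ R) ≠ ⊤ := by
      have := hφint.2
      rw [HasFiniteIntegral] at this
      refine ne_of_lt (lt_of_le_of_lt (le_of_eq ?_) this)
      apply lintegral_congr
      intro x
      rw [← ofReal_norm, Real.norm_eq_abs, abs_abs]
    have lhs_eq : ∫ B, |(∑ t : Fin (B.1 + 1), f (B.2 t)) - (∑ t : Fin (B.1 + 1), g (B.2 t))| ∂ Rcheck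
        = (∫⁻ B, ENNReal.ofReal
            |(∑ t : Fin (B.1 + 1), f (B.2 t)) - (∑ t : Fin (B.1 + 1), g (B.2 t))| ∂ Rcheck).toReal :=
      integral_eq_lintegral_of_nonneg_ae (ae_of_all _ fun B => abs_nonneg _)
        (((stmt5_meas_blocksum_real hfm).sub (stmt5_meas_blocksum_real hgm)).abs).aestronglyMeasurable
    have step : (∫⁻ B, ENNReal.ofReal
          |(∑ t : Fin (B.1 + 1), f (B.2 t)) - (∑ t : Fin (B.1 + 1), g (B.2 t))| ∂ Rcheck)
        ≤ c * ∫⁻ x, ENNReal.ofReal |f x - g x| ∂ R := by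
      rw [← key (hφm.ennreal_ofReal)]
      apply lintegral_mono
      intro B
      calc ENNReal.ofReal |(∑ t : Fin (B.1 + 1), f (B.2 t)) - (∑ t : Fin (B.1 + 1), g (B.2 t))|
          ≤ ENNReal.ofReal (∑ t : Fin (B.1 + 1), |f (B.2 t) - g (B.2 t)|) := by
            apply ENNReal.ofReal_le_ofReal
            rw [← Finset.sum_sub_distrib]
            exact Finset.abs_sum_le_sum_abs _ _
        _ = ∑ t : Fin (B.1 + 1), ENNReal.ofReal |f (B.2 t) - g (B.2 t)| :=
            ENNReal.ofReal_sum_of_nonneg fun t _ => abs_nonneg _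
    calc ∫ B, |(∑ t : Fin (B.1 + 1), f (B.2 t)) - (∑ t : Fin (B.1 + 1), g (B.2 t))| ∂ Rcheck
        = (∫⁻ B, ENNReal.ofReal
            |(∑ t : Fin (B.1 + 1), f (B.2 t)) - (∑ t : Fin (B.1 + 1), g (B.2 t))| ∂ Rcheck).toReal :=
          lhs_eq
      _ ≤ (c * ∫⁻ x, ENNReal.ofReal |f x - g x| ∂ R).toReal :=
          ENNReal.toReal_mono (ENNReal.mul_ne_top hct hL) step
      _ = c.toReal * (∫⁻ x, ENNReal.ofReal |f x - g x| ∂ R).toReal := ENNReal.toReal_mul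
      _ = c.toReal * ∫ x, |f x - g x| ∂ R := by
          rw [integral_eq_lintegral_of_nonneg_ae (ae_of_all _ fun x => abs_nonneg _)
            hφm.aestronglyMeasurable]
      _ ≤ c.toReal * (ε * ∫ x, F x ∂ R) := mul_le_mul_of_nonneg_left hgb ENNReal.toReal_nonneg
      _ = ε * (c.toReal * ∫ x, F x ∂ R) := by ring
  · -- g is not integrable: the occupation sum of |g| is non-integrable, so the LHS is 0
    have hΦ : Φ g = fun B : (k : ℕ) × (Fin (k + 1) → E) => ∑ t : Fin (B.1 + 1), |g (B.2 t)| := by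
      rw [hΦdef]; exact if_neg hgi
    rw [hΦ]
    have hRHS : 0 ≤ ε * (c.toReal * ∫ x, F x ∂ R) :=
      mul_nonneg hε.le (mul_nonneg ENNReal.toReal_nonneg (integral_nonneg hF0))
    have hgtop : ∫⁻ x, ENNReal.ofReal |g x| ∂ R = ⊤ := by
      have hni : ¬ HasFiniteIntegral g R := fun h => hgi ⟨hgm.aestronglyMeasurable, h⟩
      rw [HasFiniteIntegral, not_lt, top_le_iff] at hni
      rw [← hni]
      apply lintegral_congr
      intro x
      rw [← ofReal_norm, Real.norm_eq_abs]
    have fcheckint : Integrable (fun B : (k : ℕ) × (Fin (k + 1) → E) =>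
        ∑ t : Fin (B.1 + 1), f (B.2 t)) Rcheck := by
      refine ⟨(stmt5_meas_blocksum_real hfm).aestronglyMeasurable, ?_⟩
      rw [HasFiniteIntegral]
      calc ∫⁻ B, ‖∑ t : Fin (B.1 + 1), f (B.2 t)‖₊ ∂ Rcheck
          ≤ ∫⁻ B, ∑ t : Fin (B.1 + 1), ENNReal.ofReal (F (B.2 t)) ∂ Rcheck := by
            apply lintegral_mono
            intro B
            dsimp only
            rw [← enorm_eq_nnnorm, ← ofReal_norm, Real.norm_eq_abs]
            calc ENNReal.ofReal |∑ t : Fin (B.1 + 1), f (B.2 t)|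
                ≤ ENNReal.ofReal (∑ t : Fin (B.1 + 1), F (B.2 t)) := by
                  apply ENNReal.ofReal_le_ofReal
                  exact le_trans (Finset.abs_sum_le_sum_abs _ _)
                    (Finset.sum_le_sum fun t _ => henv f hf _)
              _ = ∑ t : Fin (B.1 + 1), ENNReal.ofReal (F (B.2 t)) :=
                  ENNReal.ofReal_sum_of_nonneg fun t _ => hF0 _
        _ = c * ∫⁻ x, ENNReal.ofReal (F x) ∂ R := key hFm.ennreal_ofReal
        _ < ⊤ := ENNReal.mul_lt_top hct.lt_top hK.lt_top
    have gcheck_not : ¬ Integrable (fun B : (k : ℕ) × (Fin (k + 1) → E) =>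
        ∑ t : Fin (B.1 + 1), |g (B.2 t)|) Rcheck := by
      intro h
      have := h.2
      rw [HasFiniteIntegral] at this
      have heq : ∫⁻ B, ‖∑ t : Fin (B.1 + 1), |g (B.2 t)|‖ₑ ∂ Rcheck
          = c * ∫⁻ x, ENNReal.ofReal |g x| ∂ R := by
        rw [← key hgm.abs.ennreal_ofReal]
        apply lintegral_congr
        intro B
        rw [← ofReal_norm, Real.norm_eq_abs,
          abs_of_nonneg (Finset.sum_nonneg fun t _ => abs_nonneg _)]
        exact ENNReal.ofReal_sum_of_nonneg fun t _ => abs_nonneg _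
      rw [heq, hgtop, ENNReal.mul_top hc0] at this
      exact absurd this (lt_irrefl ⊤)
    have habs : ¬ Integrable (fun B : (k : ℕ) × (Fin (k + 1) → E) =>
        abs ((∑ t : Fin (B.1 + 1), f (B.2 t)) - ∑ t : Fin (B.1 + 1), |g (B.2 t)|)) Rcheck := by
      intro h
      apply gcheck_not
      have hdm : Measurable fun B : (k : ℕ) × (Fin (k + 1) → E) =>
          (∑ t : Fin (B.1 + 1), f (B.2 t)) - ∑ t : Fin (B.1 + 1), |g (B.2 t)| :=
        (stmt5_meas_blocksum_real hfm).sub (stmt5_meas_blocksum_real hgm.abs)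
      have h2 : Integrable (fun B : (k : ℕ) × (Fin (k + 1) → E) =>
          (∑ t : Fin (B.1 + 1), f (B.2 t)) - ∑ t : Fin (B.1 + 1), |g (B.2 t)|) Rcheck :=
        (integrable_norm_iff hdm.aestronglyMeasurable).1
          (by simpa [Real.norm_eq_abs] using h)
      exact (fcheckint.sub h2).congr (ae_of_all _ fun B => by
        simp [Pi.sub_apply, sub_sub_cancel])
    dsimp only
    rw [integral_undef habs]
    exact hRHS
end

section
/- Let σ_S := inf{t ≥ 0 : X_t ∈ S} be the hitting time of a set S by a Markov chain, and suppose there is c > 0 such that d₀ := sup_{x∈S} E_x[exp(2τ_S/c)] < ∞, where τ_S = min{t ≥ 1 : X_t ∈ S}. Define V(x) = log G_S(x,c) with G_S(x,c) = E_x[exp(2(σ_S+1)/c)]. Then V satisfies the geometric drift condition: exp(−V(x)) · P(exp V)(x) ≤ exp(−2/c + b·1_S(x)) for all x, with b = 2 log d₀ and sup V ≤ log d₀ on S. -/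
open MeasureTheory

lemma aux_meas_sInf {α : Type*} [MeasurableSpace α] {p : ℕ → α → Prop}
    (hp : ∀ t, MeasurableSet {ω : α | p t ω}) :
    Measurable fun ω : α => sInf {t | p t ω} := by
  apply measurable_to_countable'
  intro n
  match n with
  | 0 =>
    have : (fun ω : α => sInf {t | p t ω}) ⁻¹' {0} =
        {ω | p 0 ω} ∪ ⋂ t, {ω | p t ω}ᶜ := by
      ext ω
      simp only [Set.mem_preimage, Set.mem_singleton_iff, Set.mem_union, Set.mem_iInter,
        Set.mem_compl_iff, Set.mem_setOf_eq, Nat.sInf_eq_zero]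
      constructor
      · rintro (h | h)
        · exact Or.inl h
        · exact Or.inr fun t ht => by simp [Set.eq_empty_iff_forall_notMem] at h; exact h t ht
      · rintro (h | h)
        · exact Or.inl h
        · exact Or.inr (Set.eq_empty_iff_forall_notMem.2 h)
    rw [this]
    exact (hp 0).union (MeasurableSet.iInter fun t => (hp t).compl)
  | n + 1 =>
    have : (fun ω : α => sInf {t | p t ω}) ⁻¹' {n + 1} =
        {ω | p (n+1) ω} ∩ ⋂ m, ⋂ _ : m < n + 1, {ω | p m ω}ᶜ := by
      ext ω
      simp only [Set.mem_preimage, Set.mem_singleton_iff, Set.mem_inter_iff, Set.mem_iInter,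
        Set.mem_compl_iff, Set.mem_setOf_eq]
      constructor
      · intro h
        have hne : {t | p t ω}.Nonempty := by
          by_contra hc
          rw [Set.not_nonempty_iff_eq_empty] at hc
          rw [hc, Nat.sInf_empty] at h
          exact Nat.succ_ne_zero n h.symm
        refine ⟨h ▸ Nat.sInf_mem hne, fun m hm => Nat.notMem_of_lt_sInf (h ▸ hm)⟩
      · rintro ⟨h1, h2⟩
        have hle : sInf {t | p t ω} ≤ n + 1 := Nat.sInf_le h1
        have hge : ¬ sInf {t | p t ω} < n + 1 := fun hlt =>
          h2 _ hlt (Nat.sInf_mem (⟨n + 1, h1⟩ : {t | p t ω}.Nonempty))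
        omega
    rw [this]
    exact (hp (n+1)).inter
      (MeasurableSet.iInter fun m => MeasurableSet.iInter fun _ => (hp m).compl)

lemma aux_sInf_shift {E : Type*} (ω : ℕ → E) (S : Set E)
    (h : ∃ t, 1 ≤ t ∧ ω t ∈ S) :
    sInf {t | ω (t + 1) ∈ S} + 1 = sInf {t | 1 ≤ t ∧ ω t ∈ S} := by
  set B : Set ℕ := {t | 1 ≤ t ∧ ω t ∈ S}
  have hBne : B.Nonempty := h
  obtain ⟨hB1, hB2⟩ := Nat.sInf_mem hBne
  have hA : (sInf B - 1) ∈ {t | ω (t + 1) ∈ S} := by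
    show ω (sInf B - 1 + 1) ∈ S
    rwa [Nat.sub_add_cancel hB1]
  have h1 : sInf {t | ω (t + 1) ∈ S} ≤ sInf B - 1 := Nat.sInf_le hA
  have hAmem := Nat.sInf_mem ⟨_, hA⟩
  have h2 : sInf B ≤ sInf {t | ω (t + 1) ∈ S} + 1 :=
    Nat.sInf_le ⟨Nat.succ_le_succ (Nat.zero_le _), hAmem⟩
  omega

lemma aux_lintegral_eq {E : Type*} [MeasurableSpace E]
    (μ : E → Measure (ℕ → E)) (hμm : Measurable μ)
    (S : Set E) (hS : MeasurableSet S) (c : ℝ) (x : E)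
    (hmarkov : Measure.map (fun ω n => ω (n + 1)) (μ x) =
      ((μ x).map (fun ω => ω 1)).bind μ)
    (haehit : ∀ᵐ ω ∂ μ x, ∃ t, 1 ≤ t ∧ ω t ∈ S)
    (G : E → ℝ)
    (hGof : ∀ y, ENNReal.ofReal (G y) =
      ∫⁻ ω, ENNReal.ofReal (Real.exp (2 * ((sInf {t : ℕ | ω t ∈ S} : ℕ) + 1) / c)) ∂ μ y) :
    ∫⁻ ω, ENNReal.ofReal (G (ω 1)) ∂ μ x =
      ∫⁻ ω, ENNReal.ofReal
        (Real.exp (2 * (sInf {t : ℕ | 1 ≤ t ∧ ω t ∈ S} : ℕ) / c)) ∂ μ x := by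
  have hσm : Measurable fun ω : ℕ → E => sInf {t : ℕ | ω t ∈ S} :=
    aux_meas_sInf fun t => measurable_pi_apply t hS
  have hfm : Measurable fun ω : ℕ → E =>
      Real.exp (2 * ((sInf {t : ℕ | ω t ∈ S} : ℕ) + 1) / c) := by
    have : Measurable fun ω : ℕ → E => ((sInf {t : ℕ | ω t ∈ S} : ℕ) : ℝ) :=
      measurable_from_top.comp hσm
    exact Real.measurable_exp.comp (((this.add_const 1).const_mul 2).div_const c)
  have hFm : Measurable fun ω : ℕ → E =>
      ENNReal.ofReal (Real.exp (2 * ((sInf {t : ℕ | ω t ∈ S} : ℕ) + 1) / c)) :=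
    hfm.ennreal_ofReal
  have hshift : Measurable fun (ω : ℕ → E) (n : ℕ) => ω (n + 1) :=
    measurable_pi_lambda _ fun n => measurable_pi_apply (n + 1)
  calc
    ∫⁻ ω, ENNReal.ofReal (G (ω 1)) ∂ μ x
        = ∫⁻ ω, (∫⁻ ω', ENNReal.ofReal
            (Real.exp (2 * ((sInf {t : ℕ | ω' t ∈ S} : ℕ) + 1) / c)) ∂ μ (ω 1)) ∂ μ x :=
      lintegral_congr fun ω => hGof (ω 1)
    _ = ∫⁻ y, (∫⁻ ω', ENNReal.ofReal
            (Real.exp (2 * ((sInf {t : ℕ | ω' t ∈ S} : ℕ) + 1) / c)) ∂ μ y)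
          ∂ ((μ x).map fun ω => ω 1) :=
      (lintegral_map ((Measure.measurable_lintegral hFm).comp hμm)
        (measurable_pi_apply 1)).symm
    _ = ∫⁻ ω', ENNReal.ofReal
            (Real.exp (2 * ((sInf {t : ℕ | ω' t ∈ S} : ℕ) + 1) / c))
          ∂ (((μ x).map fun ω => ω 1).bind μ) :=
      (Measure.lintegral_bind hμm.aemeasurable hFm.aemeasurable).symm
    _ = ∫⁻ ω', ENNReal.ofReal
            (Real.exp (2 * ((sInf {t : ℕ | ω' t ∈ S} : ℕ) + 1) / c))
          ∂ (Measure.map (fun ω n => ω (n + 1)) (μ x)) := by rw [hmarkov]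
    _ = ∫⁻ ω, ENNReal.ofReal
            (Real.exp (2 * ((sInf {t : ℕ | ω (t + 1) ∈ S} : ℕ) + 1) / c)) ∂ μ x :=
      lintegral_map hFm hshift
    _ = ∫⁻ ω, ENNReal.ofReal
            (Real.exp (2 * (sInf {t : ℕ | 1 ≤ t ∧ ω t ∈ S} : ℕ) / c)) ∂ μ x := by
      refine lintegral_congr_ae ?_
      filter_upwards [haehit] with ω hω
      have h := aux_sInf_shift ω S hω
      rw [show (2 * (((sInf {t : ℕ | ω (t + 1) ∈ S} : ℕ) : ℝ) + 1) / c)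
          = 2 * ((sInf {t : ℕ | 1 ≤ t ∧ ω t ∈ S} : ℕ) : ℝ) / c from by
        rw [← h]; push_cast; ring]

/-- Drift condition from exponential moments of the return time: for a Markov chain given by
the family of path measures `μ x` (started at `x`, with the Markov property for the shift),
if `d₀ ≥ sup_{x∈S} E_x[exp(2τ_S/c)]`, then `V(x) = log G_S(x,c)` with
`G_S(x,c) = E_x[exp(2(σ_S+1)/c)]` satisfies the geometric drift condition
`exp(−V(x)) P(exp V)(x) ≤ exp(−2/c + b·1_S(x))` with `b = 2 log d₀`, and `V ≤ log d₀` on `S`. -/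
theorem stmt9 {E : Type*} [MeasurableSpace E]
    (μ : E → Measure (ℕ → E)) (hμm : Measurable μ)
    [∀ x, IsProbabilityMeasure (μ x)]
    (S : Set E) (hS : MeasurableSet S)
    (c : ℝ) (hc : 0 < c) (d₀ : ℝ)
    (hstart : ∀ x, μ x {ω | ω 0 = x} = 1)
    (hmarkov : ∀ x, Measure.map (fun ω n => ω (n + 1)) (μ x) =
      ((μ x).map (fun ω => ω 1)).bind μ)
    (hhit : ∀ x, μ x {ω | ∃ t, 1 ≤ t ∧ ω t ∈ S} = 1)
    (hintσ : ∀ x, Integrable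
      (fun ω => Real.exp (2 * ((sInf {t : ℕ | ω t ∈ S} : ℕ) + 1) / c)) (μ x))
    (hintτ : ∀ x ∈ S, Integrable
      (fun ω => Real.exp (2 * (sInf {t : ℕ | 1 ≤ t ∧ ω t ∈ S} : ℕ) / c)) (μ x))
    (hd₀ : ∀ x ∈ S,
      ∫ ω, Real.exp (2 * (sInf {t : ℕ | 1 ≤ t ∧ ω t ∈ S} : ℕ) / c) ∂(μ x) ≤ d₀)
    (G : E → ℝ)
    (hG : ∀ x, G x = ∫ ω, Real.exp (2 * ((sInf {t : ℕ | ω t ∈ S} : ℕ) + 1) / c) ∂(μ x)) :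
    (∀ x, Real.exp (-(Real.log (G x))) * ∫ ω, Real.exp (Real.log (G (ω 1))) ∂(μ x) ≤
      Real.exp (-(2 / c) + (2 * Real.log d₀) * S.indicator (fun _ => (1 : ℝ)) x)) ∧
    (∀ x ∈ S, Real.log (G x) ≤ Real.log d₀) := by
  have hfnn : ∀ ω : ℕ → E,
      0 ≤ Real.exp (2 * ((sInf {t : ℕ | ω t ∈ S} : ℕ) + 1) / c) :=
    fun ω => Real.exp_nonneg _
  have hgnn : ∀ ω : ℕ → E,
      0 ≤ Real.exp (2 * (sInf {t : ℕ | 1 ≤ t ∧ ω t ∈ S} : ℕ) / c) :=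
    fun ω => Real.exp_nonneg _
  -- ae helper
  have hsub : ∀ (x : E) (T : Set (ℕ → E)), MeasurableSet T → {ω : ℕ → E | ω 0 = x} ⊆ T →
      ∀ᵐ ω ∂ μ x, ω ∈ T := by
    intro x T hT hsubset
    have h1 : μ x T = 1 :=
      le_antisymm prob_le_one (by rw [← hstart x]; exact measure_mono hsubset)
    have h2 : μ x Tᶜ = 0 := by
      rw [measure_compl hT (measure_ne_top _ _), h1, measure_univ, tsub_self]
    exact (ae_iff.2 h2)
  have hae0 : ∀ x ∈ S, ∀ᵐ ω ∂ μ x, ω 0 ∈ S := by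
    intro x hx
    exact hsub x {ω | ω 0 ∈ S} (measurable_pi_apply 0 hS)
      (fun ω hω => by rw [Set.mem_setOf_eq] at hω ⊢; rw [hω]; exact hx)
  have hae0' : ∀ x ∉ S, ∀ᵐ ω ∂ μ x, ω 0 ∉ S := by
    intro x hx
    exact hsub x {ω | ω 0 ∉ S} ((measurable_pi_apply 0 hS).compl)
      (fun ω hω => by rw [Set.mem_setOf_eq] at hω ⊢; rw [hω]; exact hx)
  have haehit : ∀ x, ∀ᵐ ω ∂ μ x, ∃ t, 1 ≤ t ∧ ω t ∈ S := by
    intro x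
    have hTm : MeasurableSet {ω : ℕ → E | ∃ t, 1 ≤ t ∧ ω t ∈ S} := by
      have : {ω : ℕ → E | ∃ t, 1 ≤ t ∧ ω t ∈ S}
          = ⋃ t, ⋃ _ : 1 ≤ t, {ω : ℕ → E | ω t ∈ S} := by
        ext ω; simp [Set.mem_iUnion]
      rw [this]
      exact MeasurableSet.iUnion fun t => MeasurableSet.iUnion fun _ =>
        measurable_pi_apply t hS
    have h2 : μ x {ω : ℕ → E | ∃ t, 1 ≤ t ∧ ω t ∈ S}ᶜ = 0 := by
      rw [measure_compl hTm (measure_ne_top _ _), hhit x, measure_univ, tsub_self]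
    exact (ae_iff.2 h2)
  -- lower bound on G
  have hGlb : ∀ y, Real.exp (2 / c) ≤ G y := by
    intro y
    rw [hG y]
    have := integral_mono (integrable_const (Real.exp (2 / c))) (hintσ y)
      (fun ω => by
        have hn : (0 : ℝ) ≤ ((sInf {t : ℕ | ω t ∈ S} : ℕ) : ℝ) := Nat.cast_nonneg _
        apply Real.exp_le_exp.2
        rw [div_le_div_iff₀ hc hc]
        nlinarith)
    simpa using this
  have hGpos : ∀ y, 0 < G y := fun y => lt_of_lt_of_le (Real.exp_pos _) (hGlb y)
  -- measurability of G
  have hσm : Measurable fun ω : ℕ → E => sInf {t : ℕ | ω t ∈ S} :=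
    aux_meas_sInf fun t => measurable_pi_apply t hS
  have hfm : Measurable fun ω : ℕ → E =>
      Real.exp (2 * ((sInf {t : ℕ | ω t ∈ S} : ℕ) + 1) / c) := by
    have : Measurable fun ω : ℕ → E => ((sInf {t : ℕ | ω t ∈ S} : ℕ) : ℝ) :=
      measurable_from_top.comp hσm
    exact Real.measurable_exp.comp (((this.add_const 1).const_mul 2).div_const c)
  have hGmeas : Measurable G := by
    have hGeq : G = fun y =>
        (∫⁻ ω, ENNReal.ofReal
          (Real.exp (2 * ((sInf {t : ℕ | ω t ∈ S} : ℕ) + 1) / c)) ∂ μ y).toReal := by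
      funext y
      rw [hG y, integral_eq_lintegral_of_nonneg_ae
        (Filter.Eventually.of_forall hfnn) hfm.aestronglyMeasurable]
    rw [hGeq]
    exact ((Measure.measurable_lintegral hfm.ennreal_ofReal).comp hμm).ennreal_toReal
  have hGof : ∀ y, ENNReal.ofReal (G y) =
      ∫⁻ ω, ENNReal.ofReal
        (Real.exp (2 * ((sInf {t : ℕ | ω t ∈ S} : ℕ) + 1) / c)) ∂ μ y := by
    intro y
    rw [hG y]
    exact ofReal_integral_eq_lintegral_ofReal (hintσ y) (Filter.Eventually.of_forall hfnn)
  -- integrability of exp(2τ/c)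
  have hgint : ∀ x, Integrable
      (fun ω => Real.exp (2 * (sInf {t : ℕ | 1 ≤ t ∧ ω t ∈ S} : ℕ) / c)) (μ x) := by
    intro x
    by_cases hx : x ∈ S
    · exact hintτ x hx
    · refine ((hintσ x).const_mul (Real.exp (-(2 / c)))).congr ?_
      filter_upwards [hae0' x hx] with ω hω
      have hset : {t : ℕ | ω t ∈ S} = {t : ℕ | 1 ≤ t ∧ ω t ∈ S} := by
        ext t
        cases t with
        | zero => simp [hω]
        | succ n => simp [Nat.succ_le_succ (Nat.zero_le n)]
      rw [← Real.exp_add, ← hset]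
      congr 1
      field_simp
      ring
  -- for x ∉ S : ∫ g = exp(-(2/c)) * G x
  have hgeq : ∀ x ∉ S, ∫ ω, Real.exp (2 * (sInf {t : ℕ | 1 ≤ t ∧ ω t ∈ S} : ℕ) / c) ∂ μ x
      = Real.exp (-(2 / c)) * G x := by
    intro x hx
    rw [hG x, ← integral_const_mul]
    refine integral_congr_ae ?_
    filter_upwards [hae0' x hx] with ω hω
    have hset : {t : ℕ | ω t ∈ S} = {t : ℕ | 1 ≤ t ∧ ω t ∈ S} := by
      ext t
      cases t with
      | zero => simp [hω]
      | succ n => simp [Nat.succ_le_succ (Nat.zero_le n)]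
    rw [← Real.exp_add, ← hset]
    congr 1
    field_simp
    ring
  -- key identity
  have key : ∀ x, ∫ ω, G (ω 1) ∂ μ x
      = ∫ ω, Real.exp (2 * (sInf {t : ℕ | 1 ≤ t ∧ ω t ∈ S} : ℕ) / c) ∂ μ x := by
    intro x
    have l1 := aux_lintegral_eq μ hμm S hS c x (hmarkov x) (haehit x) G hGof
    have hgof : ENNReal.ofReal
        (∫ ω, Real.exp (2 * (sInf {t : ℕ | 1 ≤ t ∧ ω t ∈ S} : ℕ) / c) ∂ μ x)
        = ∫⁻ ω, ENNReal.ofReal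
          (Real.exp (2 * (sInf {t : ℕ | 1 ≤ t ∧ ω t ∈ S} : ℕ) / c)) ∂ μ x :=
      ofReal_integral_eq_lintegral_ofReal (hgint x) (Filter.Eventually.of_forall hgnn)
    have hfin : ∫⁻ ω, ENNReal.ofReal (G (ω 1)) ∂ μ x < ⊤ := by
      rw [l1, ← hgof]; exact ENNReal.ofReal_lt_top
    have hGint : Integrable (fun ω => G (ω 1)) (μ x) :=
      ⟨(hGmeas.comp (measurable_pi_apply 1)).aestronglyMeasurable,
        (hasFiniteIntegral_iff_ofReal
          (Filter.Eventually.of_forall fun (ω : ℕ → E) => (hGpos (ω 1)).le)).2 hfin⟩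
    have h := ofReal_integral_eq_lintegral_ofReal hGint
      (Filter.Eventually.of_forall fun (ω : ℕ → E) => (hGpos (ω 1)).le)
    rw [l1, ← hgof] at h
    exact (ENNReal.ofReal_eq_ofReal_iff
      (integral_nonneg fun (ω : ℕ → E) => (hGpos (ω 1)).le) (integral_nonneg hgnn)).1 h
  -- G on S
  have hGS : ∀ x ∈ S, G x = Real.exp (2 / c) := by
    intro x hx
    rw [hG x]
    have : ∫ ω, Real.exp (2 * ((sInf {t : ℕ | ω t ∈ S} : ℕ) + 1) / c) ∂ μ x
        = ∫ _, Real.exp (2 / c) ∂ μ x := by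
      refine integral_congr_ae ?_
      filter_upwards [hae0 x hx] with ω hω
      have h0 : sInf {t : ℕ | ω t ∈ S} = 0 := Nat.sInf_eq_zero.2 (Or.inl hω)
      rw [h0]
      norm_num
    rw [this]
    simp
  have hd₀exp : ∀ x ∈ S, Real.exp (2 / c) ≤ d₀ := by
    intro x hx
    refine le_trans ?_ (hd₀ x hx)
    have := integral_mono_ae (integrable_const (Real.exp (2 / c))) (hgint x)
      (by
        filter_upwards [haehit x] with ω hω
        have h1 : 1 ≤ sInf {t : ℕ | 1 ≤ t ∧ ω t ∈ S} := (Nat.sInf_mem hω).1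
        apply Real.exp_le_exp.2
        rw [div_le_div_iff₀ hc hc]
        have : (1 : ℝ) ≤ ((sInf {t : ℕ | 1 ≤ t ∧ ω t ∈ S} : ℕ) : ℝ) := by
          exact_mod_cast h1
        nlinarith)
    simpa using this
  have hexplogeq : (fun ω : ℕ → E => Real.exp (Real.log (G (ω 1)))) = fun ω => G (ω 1) :=
    funext fun ω => Real.exp_log (hGpos (ω 1))
  constructor
  · intro x
    rw [hexplogeq, key x]
    by_cases hx : x ∈ S
    · have hGx : G x = Real.exp (2 / c) := hGS x hx
      have hd1 : (1 : ℝ) ≤ d₀ :=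
        le_trans (Real.one_le_exp (by positivity)) (hd₀exp x hx)
      have hd₀pos : (0 : ℝ) < d₀ := lt_of_lt_of_le one_pos hd1
      rw [Set.indicator_of_mem hx, hGx, Real.log_exp, mul_one]
      calc Real.exp (-(2 / c)) *
            ∫ ω, Real.exp (2 * (sInf {t : ℕ | 1 ≤ t ∧ ω t ∈ S} : ℕ) / c) ∂ μ x
          ≤ Real.exp (-(2 / c)) * d₀ := by
            exact mul_le_mul_of_nonneg_left (hd₀ x hx) (Real.exp_nonneg _)
        _ ≤ Real.exp (-(2 / c)) * (d₀ * d₀) := by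
            refine mul_le_mul_of_nonneg_left (by nlinarith) (Real.exp_nonneg _)
        _ = Real.exp (-(2 / c) + 2 * Real.log d₀) := by
            rw [Real.exp_add, two_mul, Real.exp_add, Real.exp_log hd₀pos]
    · rw [Set.indicator_of_notMem hx, mul_zero, add_zero, hgeq x hx,
        Real.exp_neg, Real.exp_log (hGpos x)]
      rw [mul_comm (Real.exp (-(2 / c))) (G x), ← mul_assoc,
        inv_mul_cancel₀ (hGpos x).ne', one_mul]
  · intro x hx
    rw [hGS x hx, Real.log_exp]
    calc 2 / c = Real.log (Real.exp (2 / c)) := (Real.log_exp _).symm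
      _ ≤ Real.log d₀ := Real.log_le_log (Real.exp_pos _) (hd₀exp x hx)
end

section
/- Let 0 ≤ σ(0) < σ(1) < ⋯ be the times at which an i.i.d.-increment renewal process visits (i.e., σ(i) − σ(i−1) are i.i.d. copies of τ with mean β and ‖τ‖_{ψ₁} < ∞, and σ(0) has ‖σ(0)‖_{ψ₁} < ∞). Let i_n = max{i ≥ 0 : σ(i) ≤ n}. Then there exists c > 0 such that for every 3/√n < t ≤ β^{-1}√n, P(|i_n − β^{-1} n| ≥ t√n) ≤ 4 exp(−c min(t², t√n)) up to constants depending only on β, ‖τ‖_{ψ₁}, and E[σ(0)]. -/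
open Real

lemma cube_le_exp {u : ℝ} (hu : 0 ≤ u) : 1 + u + u^2/2 + u^3/6 ≤ exp u := by
  have h := Real.sum_le_exp_of_nonneg hu 4
  simp [Finset.sum_range_succ, Nat.factorial] at h
  norm_num at h
  linarith

lemma exp_neg_le_quad {u : ℝ} (hu : 0 ≤ u) : exp (-u) ≤ 1 - u + u^2/2 := by
  have h := cube_le_exp hu
  have hpos : (0:ℝ) < 1 + u + u^2/2 + u^3/6 := by positivity
  have h1 : exp (-u) ≤ (1 + u + u^2/2 + u^3/6)⁻¹ := by
    rw [Real.exp_neg]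
    exact inv_anti₀ hpos h
  refine h1.trans ?_
  rw [inv_le_iff_one_le_mul₀ hpos]
  nlinarith [pow_nonneg hu 3, pow_nonneg hu 4, pow_nonneg hu 5]

lemma sq_le_two_exp {u : ℝ} (hu : 0 ≤ u) : u^2 ≤ 2*(exp u - 1) := by
  have h := Real.sum_le_exp_of_nonneg hu 3
  simp [Finset.sum_range_succ] at h
  norm_num at h
  linarith

lemma sq_exp_half_le {u : ℝ} (hu : 0 ≤ u) : u^2 * exp (u/2) ≤ 8*(exp u - 1) := by
  have hB := sq_le_two_exp (by linarith : (0:ℝ) ≤ u/2)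
  have h1 : (1:ℝ) ≤ exp (u/2) := Real.one_le_exp (by linarith)
  have hsq : exp (u/2) * exp (u/2) = exp u := by
    rw [← Real.exp_add]; ring_nf
  nlinarith [Real.exp_pos (u/2), mul_le_mul_of_nonneg_right hB (Real.exp_pos (u/2)).le]

lemma exp_le_quad_self {u : ℝ} (hu : 0 ≤ u) : exp u ≤ 1 + u + u^2 * exp u := by
  rcases le_or_gt u 1 with h1 | h1
  · have h2 : 1 - u ≤ exp (-u) := by
      have := Real.add_one_le_exp (-u); linarith
    have h3 : (1 - u) * exp u ≤ 1 := by
      rw [Real.exp_neg] at h2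
      have := Real.exp_pos u
      calc (1-u) * exp u ≤ (exp u)⁻¹ * exp u := by
            apply mul_le_mul_of_nonneg_right h2 this.le
        _ = 1 := inv_mul_cancel₀ this.ne'
    nlinarith [Real.exp_pos u]
  · nlinarith [mul_pos (by nlinarith : (0:ℝ) < u^2 - 1) (Real.exp_pos u)]
open MeasureTheory ProbabilityTheory

variable {Ω : Type} [MeasurableSpace Ω] {μ : Measure Ω}

lemma aux_mgf_neg [IsProbabilityMeasure μ] {X : Ω → ℝ} (hm : Measurable X)
    (hnn : ∀ ω, 0 ≤ X ω) (hint : Integrable X μ)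
    (hint2 : Integrable (fun ω => X ω ^ 2) μ) {β K : ℝ}
    (hβ : ∫ ω, X ω ∂μ = β) (h2 : ∫ ω, X ω ^ 2 ∂μ ≤ 2 * K ^ 2)
    {l : ℝ} (hl : 0 ≤ l) : mgf X μ (-l) ≤ Real.exp (-l * β + l ^ 2 * K ^ 2) := by
  have hpt : ∀ ω, Real.exp (-l * X ω) ≤ 1 - l * X ω + l ^ 2 * X ω ^ 2 / 2 := by
    intro ω
    have h := exp_neg_le_quad (mul_nonneg hl (hnn ω))
    calc Real.exp (-l * X ω) = Real.exp (-(l * X ω)) := by ring_nf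
      _ ≤ 1 - l * X ω + (l * X ω)^2/2 := h
      _ = 1 - l * X ω + l ^ 2 * X ω ^ 2 / 2 := by ring
  have hq : Integrable (fun ω => l ^ 2 * X ω ^ 2 / 2) μ := by
    have he : (fun ω => l ^ 2 * X ω ^ 2 / 2) = fun ω => (l ^ 2 / 2) * X ω ^ 2 := by
      funext ω; ring
    rw [he]; exact hint2.const_mul _
  have hint1 : Integrable (fun ω => 1 - l * X ω) μ :=
    (integrable_const 1).sub (hint.const_mul l)
  have hRint : Integrable (fun ω => 1 - l * X ω + l ^ 2 * X ω ^ 2 / 2) μ :=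
    hint1.add hq
  have hLint : Integrable (fun ω => Real.exp (-l * X ω)) μ := by
    refine Integrable.mono' (integrable_const 1) ((hm.const_mul (-l)).exp.aestronglyMeasurable) ?_
    filter_upwards with ω
    rw [Real.norm_eq_abs, abs_of_pos (Real.exp_pos _)]
    exact Real.exp_le_one_iff.2 (mul_nonpos_of_nonpos_of_nonneg (neg_nonpos.2 hl) (hnn ω))
  have h1 : mgf X μ (-l) ≤ ∫ ω, (1 - l * X ω + l ^ 2 * X ω ^ 2 / 2) ∂μ := by
    refine integral_mono hLint hRint fun ω => hpt ω
  have h2' : ∫ ω, (1 - l * X ω + l ^ 2 * X ω ^ 2 / 2) ∂μ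
      = 1 - l * β + l ^ 2 * (∫ ω, X ω ^ 2 ∂μ) / 2 := by
    rw [integral_add hint1 hq, integral_sub (integrable_const 1) (hint.const_mul l)]
    simp only [integral_const, measure_univ, probReal_univ, ENNReal.toReal_one, smul_eq_mul, one_mul]
    rw [integral_const_mul]
    rw [show (fun ω => l ^ 2 * X ω ^ 2 / 2) = (fun ω => l ^ 2 / 2 * X ω ^ 2) by
      funext ω; ring]
    rw [integral_const_mul, hβ]; ring
  have h3 : 1 - l * β + l ^ 2 * (∫ ω, X ω ^ 2 ∂μ) / 2 ≤ 1 + (-l * β + l ^ 2 * K ^ 2) := by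
    nlinarith [sq_nonneg l]
  calc mgf X μ (-l) ≤ 1 + (-l * β + l ^ 2 * K ^ 2) := by rw [h2'] at h1; linarith
    _ ≤ Real.exp (-l * β + l ^ 2 * K ^ 2) := by linarith [Real.add_one_le_exp (-l * β + l ^ 2 * K ^ 2)]

lemma aux_mgf_pos [IsProbabilityMeasure μ] {X : Ω → ℝ} (hm : Measurable X)
    (hnn : ∀ ω, 0 ≤ X ω) (hint : Integrable X μ) {β K : ℝ} (hK : 0 < K)
    (hβ : ∫ ω, X ω ∂μ = β)
    (hG : Integrable (fun ω => Real.exp (X ω / K) - 1) μ)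
    (hG1 : ∫ ω, (Real.exp (X ω / K) - 1) ∂μ ≤ 1)
    {l : ℝ} (hl : 0 ≤ l) (hl2 : l ≤ 1 / (2*K)) :
    Integrable (fun ω => Real.exp (l * X ω)) μ ∧
      mgf X μ l ≤ Real.exp (l * β + 8 * l ^ 2 * K ^ 2) := by
  have hpt : ∀ ω, Real.exp (l * X ω)
      ≤ 1 + l * X ω + 8 * l ^ 2 * K ^ 2 * (Real.exp (X ω / K) - 1) := by
    intro ω
    set x := X ω with hx
    have hxnn : 0 ≤ x := hnn ω
    have hu : 0 ≤ l * x := mul_nonneg hl hxnn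
    have h1 := exp_le_quad_self hu
    have hle : l * x ≤ x / (2*K) := by
      rw [div_eq_mul_inv, mul_comm x]
      apply mul_le_mul_of_nonneg_right _ hxnn
      rwa [one_div] at hl2
    have h2 : Real.exp (l * x) ≤ Real.exp ((x/K)/2) :=
      Real.exp_le_exp.2 (hle.trans_eq (by ring))
    have h3 : (l*x)^2 * Real.exp (l*x) ≤ l^2 * (K^2 * ((x/K)^2 * Real.exp ((x/K)/2))) := by
      have hxk : (x/K)^2 * K^2 = x^2 := by field_simp
      calc (l*x)^2 * Real.exp (l*x) ≤ (l*x)^2 * Real.exp ((x/K)/2) := by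
            apply mul_le_mul_of_nonneg_left h2 (sq_nonneg _)
        _ = l^2 * (K^2 * ((x/K)^2 * Real.exp ((x/K)/2))) := by
            rw [mul_pow]; rw [← hxk]; ring
    have h4 := sq_exp_half_le (div_nonneg hxnn hK.le)
    have h5 : (l*x)^2 * Real.exp (l*x) ≤ 8 * l^2 * K^2 * (Real.exp (x/K) - 1) := by
      calc (l*x)^2 * Real.exp (l*x) ≤ l^2 * (K^2 * ((x/K)^2 * Real.exp ((x/K)/2))) := h3
        _ ≤ l^2 * (K^2 * (8 * (Real.exp (x/K) - 1))) := by
            apply mul_le_mul_of_nonneg_left _ (sq_nonneg l)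
            apply mul_le_mul_of_nonneg_left _ (sq_nonneg K)
            exact h4
        _ = 8 * l^2 * K^2 * (Real.exp (x/K) - 1) := by ring
    nlinarith [h1, h5]
  have hint1 : Integrable (fun ω => 1 + l * X ω) μ :=
    (integrable_const 1).add (hint.const_mul l)
  have hq : Integrable (fun ω => 8 * l ^ 2 * K ^ 2 * (Real.exp (X ω / K) - 1)) μ :=
    hG.const_mul _
  have hRint : Integrable
      (fun ω => 1 + l * X ω + 8 * l ^ 2 * K ^ 2 * (Real.exp (X ω / K) - 1)) μ :=
    hint1.add hq
  have hLint : Integrable (fun ω => Real.exp (l * X ω)) μ := by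
    refine Integrable.mono' hRint ((hm.const_mul l).exp.aestronglyMeasurable) ?_
    filter_upwards with ω
    rw [Real.norm_eq_abs, abs_of_pos (Real.exp_pos _)]
    exact hpt ω
  refine ⟨hLint, ?_⟩
  have h1 : mgf X μ l ≤ ∫ ω, (1 + l * X ω + 8 * l ^ 2 * K ^ 2 * (Real.exp (X ω / K) - 1)) ∂μ :=
    integral_mono hLint hRint fun ω => hpt ω
  have h2 : ∫ ω, (1 + l * X ω + 8 * l ^ 2 * K ^ 2 * (Real.exp (X ω / K) - 1)) ∂μ
      = 1 + l * β + 8 * l ^ 2 * K ^ 2 * (∫ ω, (Real.exp (X ω / K) - 1) ∂μ) := by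
    rw [integral_add hint1 hq, integral_add (integrable_const 1) (hint.const_mul l)]
    simp only [integral_const, measure_univ, probReal_univ, ENNReal.toReal_one, smul_eq_mul, one_mul]
    rw [integral_const_mul, integral_const_mul, hβ]
  have h3 : 1 + l * β + 8 * l ^ 2 * K ^ 2 * (∫ ω, (Real.exp (X ω / K) - 1) ∂μ)
      ≤ 1 + (l * β + 8 * l ^ 2 * K ^ 2) := by
    have hc : (0:ℝ) ≤ 8 * l ^ 2 * K ^ 2 := by positivity
    nlinarith [mul_le_mul_of_nonneg_left hG1 hc]
  calc mgf X μ l ≤ 1 + (l * β + 8 * l ^ 2 * K ^ 2) := by rw [h2] at h1; linarith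
    _ ≤ Real.exp (l * β + 8 * l ^ 2 * K ^ 2) := by
        linarith [Real.add_one_le_exp (l * β + 8 * l ^ 2 * K ^ 2)]

set_option maxHeartbeats 16000000 in
/-- Concentration of the renewal count `i_n = max{i : σ(i) ≤ n}` for a renewal process with
i.i.d. sub-exponential increments of mean `β` and sub-exponential delay `σ(0)`: there are
constants `c, C` (depending only on `β`, the `ψ₁`-bound `K` and the delay mean bound `s₀`)
such that for `3/√n < t ≤ β⁻¹√n`,
`P(|i_n − β⁻¹n| ≥ t√n) ≤ C exp(−c min(t², t√n))`. -/
theorem stmt17 (β K s₀ : ℝ) (hβ : 0 < β) (hK : 0 < K) (hs₀ : 0 ≤ s₀) :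
    ∃ c C : ℝ, 0 < c ∧ 0 < C ∧
    ∀ (Ω : Type) (_ : MeasurableSpace Ω) (μ : Measure Ω), IsProbabilityMeasure μ →
    ∀ σ : ℕ → Ω → ℕ, (∀ i, Measurable (σ i)) →
    (∀ i ω, σ i ω < σ (i + 1) ω) →
    iIndepFun (fun i ω => σ (i + 1) ω - σ i ω) μ →
    (∀ i, Measure.map (fun ω => σ (i + 1) ω - σ i ω) μ =
      Measure.map (fun ω => σ 1 ω - σ 0 ω) μ) →
    (∫ ω, ((σ 1 ω - σ 0 ω : ℕ) : ℝ) ∂μ) = β →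
    (∫⁻ ω, ENNReal.ofReal (Real.exp (((σ 1 ω - σ 0 ω : ℕ) : ℝ) / K) - 1) ∂μ) ≤ 1 →
    (∫⁻ ω, ENNReal.ofReal (Real.exp ((σ 0 ω : ℝ) / K) - 1) ∂μ) ≤ 1 →
    (∫ ω, (σ 0 ω : ℝ) ∂μ) ≤ s₀ →
    ∀ (n : ℕ) (t : ℝ), 3 / Real.sqrt n < t → t ≤ β⁻¹ * Real.sqrt n →
      μ {ω | t * Real.sqrt n ≤ |((sSup {i : ℕ | σ i ω ≤ n} : ℕ) : ℝ) - β⁻¹ * n|} ≤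
        ENNReal.ofReal (C * Real.exp (-c * min (t ^ 2) (t * Real.sqrt n))) := by
  refine ⟨(256*K^2 + 8*K)⁻¹, 4 * Real.exp ((256*K^2 + 8*K)⁻¹ * (4*β + 4*K)^2),
    by positivity, by positivity, ?_⟩
  intro Ω mΩ μ hμ σ hσm hσlt hindep hid hmean hψτ hψ0 _hs0 n t ht1 ht2
  set c : ℝ := (256*K^2 + 8*K)⁻¹ with hcdef
  have hc : 0 < c := by rw [hcdef]; positivity
  -- basic facts about n, t, s
  have hsn : 0 < Real.sqrt n := by
    rcases (Real.sqrt_nonneg (n:ℝ)).lt_or_eq with h | h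
    · exact h
    · exfalso
      rw [← h, div_zero] at ht1
      rw [← h, mul_zero] at ht2
      linarith
  have hnR : (0:ℝ) < (n:ℝ) := Real.sqrt_pos.mp hsn
  have hn1 : (1:ℝ) ≤ (n:ℝ) := by
    have : (0:ℕ) < n := by exact_mod_cast hnR
    exact_mod_cast this
  set s : ℝ := t * Real.sqrt n with hsdef
  have htpos : 0 < t := lt_of_le_of_lt (by positivity) ht1
  have hspos : 0 < s := by rw [hsdef]; positivity
  have hsβn : β * s ≤ (n:ℝ) := by
    have h1 : t * Real.sqrt n ≤ β⁻¹ * Real.sqrt n * Real.sqrt n :=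
      mul_le_mul_of_nonneg_right ht2 hsn.le
    have h2 : Real.sqrt n * Real.sqrt n = (n:ℝ) := Real.mul_self_sqrt (by positivity)
    rw [hsdef]
    calc β * (t * Real.sqrt n) ≤ β * (β⁻¹ * Real.sqrt n * Real.sqrt n) := by
          apply mul_le_mul_of_nonneg_left h1 hβ.le
      _ = β * β⁻¹ * (n:ℝ) := by rw [mul_assoc (β⁻¹), h2]; ring
      _ = (n:ℝ) := by rw [mul_inv_cancel₀ hβ.ne', one_mul]
  have hs2 : s^2 = t^2 * (n:ℝ) := by
    rw [hsdef, mul_pow, Real.sq_sqrt (by positivity : (0:ℝ) ≤ (n:ℝ))]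
  -- the increment variables
  set X : ℕ → Ω → ℝ := fun i ω => ((σ (i+1) ω - σ i ω : ℕ) : ℝ) with hXdef
  have hcastm : Measurable (fun k : ℕ => (k:ℝ)) := measurable_from_top
  have hXm : ∀ i, Measurable (X i) := fun i =>
    hcastm.comp ((hσm (i+1)).sub (hσm i))
  have hXnn : ∀ i ω, 0 ≤ X i ω := fun i ω => Nat.cast_nonneg _
  have hX1 : ∀ i ω, 1 ≤ X i ω := by
    intro i ω
    have h := hσlt i ω
    have h2 : 1 ≤ σ (i+1) ω - σ i ω := by omega
    show (1:ℝ) ≤ ((σ (i+1) ω - σ i ω : ℕ) : ℝ)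
    exact_mod_cast h2
  have hmap : ∀ i, Measure.map (X i) μ = Measure.map (X 0) μ := by
    intro i
    have h1 : Measure.map (X i) μ
        = Measure.map (fun k:ℕ => (k:ℝ)) (Measure.map (fun ω => σ (i+1) ω - σ i ω) μ) := by
      rw [Measure.map_map (f := fun ω => σ (i+1) ω - σ i ω) hcastm ((hσm (i+1)).sub (hσm i))]
      rfl
    have h2 : Measure.map (X 0) μ
        = Measure.map (fun k:ℕ => (k:ℝ)) (Measure.map (fun ω => σ 1 ω - σ 0 ω) μ) := by
      rw [Measure.map_map (f := fun ω => σ 1 ω - σ 0 ω) hcastm ((hσm 1).sub (hσm 0))]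
      rfl
    rw [h1, h2, hid i]
  have hindepX : iIndepFun X μ :=
    hindep.comp (fun _ => (fun k:ℕ => (k:ℝ))) (fun _ => hcastm)
  have hmgf_eq : ∀ (i:ℕ) (l:ℝ), mgf (X i) μ l = mgf (X 0) μ l := by
    intro i l
    have hg : Measurable (fun x : ℝ => Real.exp (l * x)) := (measurable_id.const_mul l).exp
    show ∫ ω, Real.exp (l * X i ω) ∂μ = ∫ ω, Real.exp (l * X 0 ω) ∂μ
    rw [← integral_map (hXm i).aemeasurable hg.aestronglyMeasurable,
        ← integral_map (hXm 0).aemeasurable hg.aestronglyMeasurable, hmap i]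
  have hintexp : ∀ (i : ℕ) (l : ℝ), Integrable (fun ω => Real.exp (l * X 0 ω)) μ →
      Integrable (fun ω => Real.exp (l * X i ω)) μ := by
    intro i l h
    have hg : Measurable (fun x : ℝ => Real.exp (l * x)) := (measurable_id.const_mul l).exp
    have h1 : Integrable (fun x : ℝ => Real.exp (l * x)) (Measure.map (X i) μ) := by
      rw [hmap i, integrable_map_measure hg.aestronglyMeasurable (hXm 0).aemeasurable]
      exact h
    rw [integrable_map_measure hg.aestronglyMeasurable (hXm i).aemeasurable] at h1
    exact h1
  -- integrability facts for X 0
  have hψτ' : (∫⁻ ω, ENNReal.ofReal (Real.exp (X 0 ω / K) - 1) ∂μ) ≤ 1 := hψτ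
  have hGnn : ∀ ω, 0 ≤ Real.exp (X 0 ω / K) - 1 := by
    intro ω
    have h0 : 0 ≤ X 0 ω / K := div_nonneg (hXnn 0 ω) hK.le
    linarith [Real.one_le_exp h0]
  have hGmeas : Measurable (fun ω => Real.exp (X 0 ω / K) - 1) :=
    (((hXm 0).div_const K).exp).sub measurable_const
  have hGint : Integrable (fun ω => Real.exp (X 0 ω / K) - 1) μ := by
    refine ⟨hGmeas.aestronglyMeasurable, ?_⟩
    rw [hasFiniteIntegral_iff_ofReal (ae_of_all _ hGnn)]
    exact lt_of_le_of_lt hψτ' ENNReal.one_lt_top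
  have hGle : ∫ ω, (Real.exp (X 0 ω / K) - 1) ∂μ ≤ 1 := by
    rw [integral_eq_lintegral_of_nonneg_ae (ae_of_all _ hGnn) hGmeas.aestronglyMeasurable]
    have h := ENNReal.toReal_mono ENNReal.one_ne_top hψτ'
    simpa using h
  have hX0int : Integrable (X 0) μ := by
    refine ⟨(hXm 0).aestronglyMeasurable, ?_⟩
    rw [hasFiniteIntegral_iff_ofReal (ae_of_all _ (hXnn 0))]
    calc ∫⁻ ω, ENNReal.ofReal (X 0 ω) ∂μ
        ≤ ∫⁻ ω, ENNReal.ofReal K * ENNReal.ofReal (Real.exp (X 0 ω / K) - 1) ∂μ := by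
          refine lintegral_mono fun ω => ?_
          have hpw : X 0 ω ≤ K * (Real.exp (X 0 ω / K) - 1) := by
            have h := Real.add_one_le_exp (X 0 ω / K)
            have h2 : X 0 ω / K ≤ Real.exp (X 0 ω / K) - 1 := by linarith
            calc X 0 ω = K * (X 0 ω / K) := by field_simp
              _ ≤ K * (Real.exp (X 0 ω / K) - 1) := mul_le_mul_of_nonneg_left h2 hK.le
          have hh := ENNReal.ofReal_le_ofReal hpw
          rwa [ENNReal.ofReal_mul hK.le] at hh
      _ = ENNReal.ofReal K * ∫⁻ ω, ENNReal.ofReal (Real.exp (X 0 ω / K) - 1) ∂μ :=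
          lintegral_const_mul _ (ENNReal.measurable_ofReal.comp hGmeas)
      _ ≤ ENNReal.ofReal K * 1 := by gcongr
      _ < ⊤ := by
          rw [mul_one]
          exact ENNReal.ofReal_lt_top
  have hmean' : ∫ ω, X 0 ω ∂μ = β := hmean
  have hβ1 : (1:ℝ) ≤ β := by
    rw [← hmean']
    calc (1:ℝ) = ∫ _ω, (1:ℝ) ∂μ := by simp
      _ ≤ ∫ ω, X 0 ω ∂μ := integral_mono (integrable_const 1) hX0int (fun ω => hX1 0 ω)
  have hbinv : β⁻¹ ≤ 1 := by
    rw [inv_eq_one_div, div_le_one hβ]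
    exact hβ1
  have htsq : t ≤ Real.sqrt n := by
    calc t ≤ β⁻¹ * Real.sqrt n := ht2
      _ ≤ 1 * Real.sqrt n := mul_le_mul_of_nonneg_right hbinv hsn.le
      _ = Real.sqrt n := one_mul _
  have ht2s : t^2 ≤ s := by
    rw [hsdef, pow_two]
    exact mul_le_mul_of_nonneg_left htsq htpos.le
  have hsn' : s ≤ (n:ℝ) := by nlinarith
  have hann : β⁻¹ * (n:ℝ) ≤ (n:ℝ) := by
    calc β⁻¹ * (n:ℝ) ≤ 1 * (n:ℝ) := mul_le_mul_of_nonneg_right hbinv hnR.le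
      _ = (n:ℝ) := one_mul _
  -- square integrability of X 0
  have hsqle : ∀ ω, X 0 ω^2 ≤ 2*K^2*(Real.exp (X 0 ω / K) - 1) := by
    intro ω
    have h := sq_le_two_exp (div_nonneg (hXnn 0 ω) hK.le)
    have hxk : (X 0 ω / K)^2 * K^2 = X 0 ω ^2 := by field_simp
    nlinarith [mul_le_mul_of_nonneg_right h (sq_nonneg K)]
  have hX2meas : Measurable (fun ω => X 0 ω^2) := (hXm 0).pow_const 2
  have hX2int : Integrable (fun ω => X 0 ω^2) μ := by
    refine ⟨hX2meas.aestronglyMeasurable, ?_⟩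
    rw [hasFiniteIntegral_iff_ofReal (ae_of_all _ (fun ω => sq_nonneg (X 0 ω)))]
    calc ∫⁻ ω, ENNReal.ofReal (X 0 ω^2) ∂μ
        ≤ ∫⁻ ω, ENNReal.ofReal (2*K^2) * ENNReal.ofReal (Real.exp (X 0 ω / K) - 1) ∂μ := by
          refine lintegral_mono fun ω => ?_
          have hh := ENNReal.ofReal_le_ofReal (hsqle ω)
          rwa [ENNReal.ofReal_mul (by positivity : (0:ℝ) ≤ 2*K^2)] at hh
      _ = ENNReal.ofReal (2*K^2) * ∫⁻ ω, ENNReal.ofReal (Real.exp (X 0 ω / K) - 1) ∂μ :=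
          lintegral_const_mul _ (ENNReal.measurable_ofReal.comp hGmeas)
      _ ≤ ENNReal.ofReal (2*K^2) * 1 := by gcongr
      _ < ⊤ := by
          rw [mul_one]
          exact ENNReal.ofReal_lt_top
  have hX2le : ∫ ω, X 0 ω^2 ∂μ ≤ 2*K^2 := by
    have hup : ∫ ω, X 0 ω^2 ∂μ ≤ ∫ ω, 2*K^2*(Real.exp (X 0 ω/K) - 1) ∂μ :=
      integral_mono hX2int (hGint.const_mul _) hsqle
    rw [integral_const_mul] at hup
    nlinarith [hup, hGle, sq_nonneg K]
  -- telescoping sums and monotonicity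
  have hsum : ∀ (k:ℕ) (ω), (∑ i ∈ Finset.range k, X i) ω = (σ k ω : ℝ) - (σ 0 ω : ℝ) := by
    intro k ω
    rw [Finset.sum_apply]
    have hterm : ∀ i, X i ω = (σ (i+1) ω : ℝ) - (σ i ω : ℝ) := by
      intro i
      show ((σ (i+1) ω - σ i ω : ℕ) : ℝ) = _
      rw [Nat.cast_sub (le_of_lt (hσlt i ω))]
    simp_rw [hterm]
    exact Finset.sum_range_sub (fun i => ((σ i ω : ℕ):ℝ)) k
  have hmono : ∀ ω ⦃i j : ℕ⦄, i ≤ j → σ i ω ≤ σ j ω := fun ω =>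
    (strictMono_nat_of_lt_succ (fun i => hσlt i ω)).monotone
  have hge : ∀ ω (i:ℕ), i ≤ σ i ω := fun ω i =>
    (strictMono_nat_of_lt_succ (fun j => hσlt j ω)).le_apply
  have hbdd : ∀ ω, BddAbove {i : ℕ | σ i ω ≤ n} := by
    intro ω
    refine ⟨n, fun i hi => ?_⟩
    exact le_trans (hge ω i) hi
  -- constants facts
  have hc12 : c ≤ 1/(12*K^2) := by
    rw [hcdef, ← one_div]
    apply one_div_le_one_div_of_le (by positivity)
    nlinarith
  have hc256 : c ≤ 1/(256*K^2) := by
    rw [hcdef, ← one_div]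
    apply one_div_le_one_div_of_le (by positivity)
    nlinarith
  have hc8 : c ≤ 1/(8*K) := by
    rw [hcdef, ← one_div]
    apply one_div_le_one_div_of_le (by positivity)
    nlinarith
  have hmin' : min (t^2) s = t^2 := min_eq_left ht2s
  rw [hmin']
  by_cases hsT : s ≤ 4*β + 4*K
  · -- trivial regime: probability ≤ 1 ≤ bound
    calc μ _ ≤ 1 := prob_le_one
      _ ≤ ENNReal.ofReal (4 * Real.exp (c * (4*β + 4*K)^2) * Real.exp (-c * t^2)) := by
          rw [← ENNReal.ofReal_one]
          apply ENNReal.ofReal_le_ofReal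
          have hT2 : t^2 ≤ (4*β + 4*K)^2 := by nlinarith
          have h1 : (1:ℝ) ≤ Real.exp (c * (4*β + 4*K)^2) * Real.exp (-c * t^2) := by
            rw [← Real.exp_add]
            apply Real.one_le_exp
            nlinarith [hc.le]
          nlinarith
  · push_neg at hsT
    -- split the event
    have hEsub : {ω | s ≤ |((sSup {i : ℕ | σ i ω ≤ n} : ℕ) : ℝ) - β⁻¹ * n|}
        ⊆ {ω | β⁻¹*(n:ℝ) + s ≤ ((sSup {i : ℕ | σ i ω ≤ n} : ℕ) : ℝ)}
          ∪ {ω | ((sSup {i : ℕ | σ i ω ≤ n} : ℕ) : ℝ) ≤ β⁻¹*(n:ℝ) - s} := by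
      intro ω hω
      simp only [Set.mem_setOf_eq] at hω
      rcases le_abs.mp hω with h | h
      · left; simp only [Set.mem_setOf_eq]; linarith
      · right; simp only [Set.mem_setOf_eq]; linarith
    -- Upper deviation bound
    have hA : μ {ω | β⁻¹*(n:ℝ) + s ≤ ((sSup {i : ℕ | σ i ω ≤ n} : ℕ) : ℝ)}
        ≤ ENNReal.ofReal (Real.exp (-c * t^2)) := by
      set kp : ℕ := ⌈β⁻¹*(n:ℝ) + s⌉₊ with hkpdef
      set S : Ω → ℝ := ∑ i ∈ Finset.range kp, X i with hSdef
      have hSmeas : Measurable S := by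
        have hfe : S = fun a => ∑ i ∈ Finset.range kp, X i a := by
          funext a; rw [hSdef, Finset.sum_apply]
        rw [hfe]
        exact Finset.measurable_sum _ (fun i _ => hXm i)
      have hsub : {ω | β⁻¹*(n:ℝ) + s ≤ ((sSup {i : ℕ | σ i ω ≤ n} : ℕ) : ℝ)}
          ⊆ {ω | S ω ≤ (n:ℝ)} := by
        intro ω hω
        simp only [Set.mem_setOf_eq] at hω ⊢
        have hkple : kp ≤ sSup {i : ℕ | σ i ω ≤ n} := Nat.ceil_le.mpr hω
        have hkppos : 0 < kp := Nat.ceil_pos.mpr (by positivity)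
        have hne : {i : ℕ | σ i ω ≤ n}.Nonempty := by
          by_contra h
          rw [Set.not_nonempty_iff_eq_empty] at h
          rw [h, csSup_empty] at hkple
          simp at hkple
          omega
        have hmem : sSup {i : ℕ | σ i ω ≤ n} ∈ {i : ℕ | σ i ω ≤ n} :=
          Nat.sSup_mem hne (hbdd ω)
        have hσkp : σ kp ω ≤ n := le_trans (hmono ω hkple) hmem
        calc S ω = (σ kp ω : ℝ) - (σ 0 ω : ℝ) := hsum kp ω
          _ ≤ (σ kp ω : ℝ) := by
              have : (0:ℝ) ≤ (σ 0 ω : ℝ) := Nat.cast_nonneg _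
              linarith
          _ ≤ (n:ℝ) := Nat.cast_le.2 hσkp
      set l : ℝ := s/(6*(n:ℝ)*K^2) with hldef
      have hl0 : 0 ≤ l := by rw [hldef]; positivity
      have hSnn : ∀ ω, 0 ≤ S ω := by
        intro ω
        rw [hSdef, Finset.sum_apply]
        exact Finset.sum_nonneg (fun i _ => hXnn i ω)
      have hintS : Integrable (fun ω => Real.exp (-l * S ω)) μ := by
        refine Integrable.mono' (integrable_const 1)
          ((hSmeas.const_mul (-l)).exp.aestronglyMeasurable) ?_
        filter_upwards with ω
        rw [Real.norm_eq_abs, abs_of_pos (Real.exp_pos _)]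
        apply Real.exp_le_one_iff.2
        exact mul_nonpos_of_nonpos_of_nonneg (neg_nonpos.2 hl0) (hSnn ω)
      have hcher := measure_le_le_exp_mul_mgf (μ := μ) (X := S) (t := -l) ((n:ℝ))
        (neg_nonpos.2 hl0) hintS
      have hmgfS : mgf S μ (-l) ≤ Real.exp ((kp:ℝ) * (-l*β + l^2*K^2)) := by
        rw [hSdef, hindepX.mgf_sum hXm]
        have heq : ∀ i ∈ Finset.range kp, mgf (X i) μ (-l) = mgf (X 0) μ (-l) :=
          fun i _ => hmgf_eq i _
        rw [Finset.prod_congr rfl heq, Finset.prod_const, Finset.card_range]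
        have hone := aux_mgf_neg (μ := μ) (hXm 0) (hXnn 0) hX0int hX2int hmean' hX2le hl0
        calc (mgf (X 0) μ (-l))^kp ≤ (Real.exp (-l*β + l^2*K^2))^kp :=
              pow_le_pow_left₀ mgf_nonneg hone kp
          _ = Real.exp ((kp:ℝ) * (-l*β + l^2*K^2)) := by
              rw [← Real.exp_nat_mul]
      -- arithmetic: exponent bound
      have hkp_lb : β⁻¹*(n:ℝ) + s ≤ (kp:ℝ) := Nat.le_ceil _
      have hkp_ub : (kp:ℝ) ≤ 3*(n:ℝ) := by
        have h1 : ((kp:ℝ)) < (β⁻¹*(n:ℝ) + s) + 1 := Nat.ceil_lt_add_one (by positivity)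
        linarith
      have hkpβ : (n:ℝ) + s*β ≤ (kp:ℝ)*β := by
        have h1 : (β⁻¹*(n:ℝ) + s)*β ≤ (kp:ℝ)*β := mul_le_mul_of_nonneg_right hkp_lb hβ.le
        have h2 : (β⁻¹*(n:ℝ) + s)*β = (n:ℝ) + s*β := by field_simp
        linarith
      have harithA : l*(n:ℝ) + (kp:ℝ) * (-l*β + l^2*K^2) ≤ -c * t^2 := by
        have e1 : l*(n:ℝ) + (kp:ℝ) * (-l*β + l^2*K^2)
            ≤ l*(n:ℝ) - l*((n:ℝ) + s*β) + 3*(n:ℝ)*(l^2*K^2) := by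
          have t1 := mul_le_mul_of_nonneg_right hkpβ hl0
          have t2 := mul_le_mul_of_nonneg_right hkp_ub (by positivity : (0:ℝ) ≤ l^2*K^2)
          linarith only [t1, t2]
        have e2 : l*(n:ℝ) - l*((n:ℝ) + s*β) + 3*(n:ℝ)*(l^2*K^2) ≤ -(l*s) + 3*(n:ℝ)*(l^2*K^2) := by
          have h3 : 0 ≤ l*s*(β-1) := mul_nonneg (mul_nonneg hl0 hspos.le) (by linarith only [hβ1])
          linarith only [h3]
        have e3 : -(l*s) + 3*(n:ℝ)*(l^2*K^2) = -(s^2/(12*(n:ℝ)*K^2)) := by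
          rw [hldef]
          field_simp
          ring
        have e4 : s^2/(12*(n:ℝ)*K^2) = t^2/(12*K^2) := by
          rw [hs2]
          field_simp
        have e5 : c * t^2 ≤ t^2/(12*K^2) := by
          have := mul_le_mul_of_nonneg_right hc12 (sq_nonneg t)
          calc c * t^2 ≤ 1/(12*K^2) * t^2 := this
            _ = t^2/(12*K^2) := by ring
        linarith
      have hfinal : (μ {ω | S ω ≤ (n:ℝ)}).toReal ≤ Real.exp (-c * t^2) := by
        refine hcher.trans ?_
        calc Real.exp (-(-l) * (n:ℝ)) * mgf S μ (-l)
            ≤ Real.exp (l * (n:ℝ)) * Real.exp ((kp:ℝ) * (-l*β + l^2*K^2)) := by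
              rw [neg_neg]
              exact mul_le_mul_of_nonneg_left hmgfS (Real.exp_pos _).le
          _ = Real.exp (l*(n:ℝ) + (kp:ℝ) * (-l*β + l^2*K^2)) := (Real.exp_add _ _).symm
          _ ≤ Real.exp (-c * t^2) := Real.exp_le_exp.2 harithA
      calc μ {ω | β⁻¹*(n:ℝ) + s ≤ ((sSup {i : ℕ | σ i ω ≤ n} : ℕ) : ℝ)}
          ≤ μ {ω | S ω ≤ (n:ℝ)} := measure_mono hsub
        _ ≤ ENNReal.ofReal (Real.exp (-c * t^2)) :=
            (ENNReal.le_ofReal_iff_toReal_le (measure_ne_top μ _) (Real.exp_pos _).le).2 hfinal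
    -- Lower deviation bound
    have hB : μ {ω | ((sSup {i : ℕ | σ i ω ≤ n} : ℕ) : ℝ) ≤ β⁻¹*(n:ℝ) - s}
        ≤ ENNReal.ofReal (3 * Real.exp (-c * t^2)) := by
      by_cases hab : β⁻¹*(n:ℝ) - s < 0
      · have hempty : {ω | ((sSup {i : ℕ | σ i ω ≤ n} : ℕ) : ℝ) ≤ β⁻¹*(n:ℝ) - s} = ∅ := by
          apply Set.eq_empty_iff_forall_notMem.mpr
          intro ω hω
          simp only [Set.mem_setOf_eq] at hω
          have : (0:ℝ) ≤ ((sSup {i : ℕ | σ i ω ≤ n} : ℕ) : ℝ) := Nat.cast_nonneg _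
          linarith
        rw [hempty, measure_empty]
        positivity
      push_neg at hab
      set km : ℕ := ⌊β⁻¹*(n:ℝ) - s⌋₊ with hkmdef
      set m : ℕ := km + 1 with hmdef
      set S : Ω → ℝ := ∑ i ∈ Finset.range m, X i with hSdef
      -- bound on the delay term
      have hB1 : μ {ω | s/4 ≤ ((σ 0 ω : ℕ):ℝ)} ≤ ENNReal.ofReal (2 * Real.exp (-c * t^2)) := by
        set r : ℝ := s/(4*K) with hrdef
        have hr1 : 1 ≤ r := by
          rw [hrdef, le_div_iff₀ (by positivity)]
          linarith
        have hexp2 : 2 ≤ Real.exp r := by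
          have h1 := Real.add_one_le_exp 1
          calc (2:ℝ) = 1 + 1 := by norm_num
            _ ≤ Real.exp 1 := by linarith
            _ ≤ Real.exp r := Real.exp_le_exp.2 hr1
        have hFmeas : Measurable (fun ω => ENNReal.ofReal (Real.exp ((σ 0 ω : ℝ)/K) - 1)) :=
          ENNReal.measurable_ofReal.comp
            ((((hcastm.comp (hσm 0)).div_const K).exp).sub measurable_const)
        have hsub1 : {ω | s/4 ≤ ((σ 0 ω : ℕ):ℝ)}
            ⊆ {ω | ENNReal.ofReal (Real.exp r - 1)
                ≤ ENNReal.ofReal (Real.exp ((σ 0 ω : ℝ)/K) - 1)} := by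
          intro ω hω
          simp only [Set.mem_setOf_eq] at hω ⊢
          apply ENNReal.ofReal_le_ofReal
          have h1 : r ≤ (σ 0 ω : ℝ)/K := by
            rw [hrdef, ← div_div]
            gcongr
          have h2 : Real.exp r ≤ Real.exp ((σ 0 ω : ℝ)/K) := Real.exp_le_exp.2 h1
          linarith
        have hεne : ENNReal.ofReal (Real.exp r - 1) ≠ 0 := by
          simp only [ne_eq, ENNReal.ofReal_eq_zero, not_le]
          linarith
        have hmar := meas_ge_le_lintegral_div (μ := μ) hFmeas.aemeasurable
          (ε := ENNReal.ofReal (Real.exp r - 1)) hεne ENNReal.ofReal_ne_top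
        calc μ {ω | s/4 ≤ ((σ 0 ω : ℕ):ℝ)}
            ≤ μ {ω | ENNReal.ofReal (Real.exp r - 1)
                ≤ ENNReal.ofReal (Real.exp ((σ 0 ω : ℝ)/K) - 1)} := measure_mono hsub1
          _ ≤ (∫⁻ ω, ENNReal.ofReal (Real.exp ((σ 0 ω : ℝ)/K) - 1) ∂μ)
              / ENNReal.ofReal (Real.exp r - 1) := hmar
          _ ≤ 1 / ENNReal.ofReal (Real.exp r - 1) := by
              gcongr
          _ = ENNReal.ofReal ((Real.exp r - 1)⁻¹) := by
              rw [ENNReal.ofReal_inv_of_pos (by linarith), one_div]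
          _ ≤ ENNReal.ofReal (2 * Real.exp (-c * t^2)) := by
              apply ENNReal.ofReal_le_ofReal
              have hp1 : 0 < Real.exp r - 1 := by linarith
              have h5 : (Real.exp r - 1)⁻¹ ≤ 2 * Real.exp (-r) := by
                rw [Real.exp_neg]
                have h6 : Real.exp r ≤ 2*(Real.exp r - 1) := by linarith
                calc (Real.exp r - 1)⁻¹ = 2 * (2*(Real.exp r - 1))⁻¹ := by
                      field_simp
                  _ ≤ 2 * (Real.exp r)⁻¹ := by gcongr
              have h7 : Real.exp (-r) ≤ Real.exp (-c * t^2) := by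
                apply Real.exp_le_exp.2
                have e1 : c * t^2 ≤ 1/(8*K) * t^2 :=
                  mul_le_mul_of_nonneg_right hc8 (sq_nonneg t)
                have e2 : 1/(8*K) * t^2 ≤ 1/(8*K) * s :=
                  mul_le_mul_of_nonneg_left ht2s (by positivity)
                have e3 : (1:ℝ)/(8*K) * s ≤ s/(4*K) := by
                  rw [div_mul_eq_mul_div, one_mul, div_le_div_iff₀ (by positivity) (by positivity)]
                  nlinarith [mul_nonneg hspos.le hK.le]
                rw [hrdef]
                linarith
              linarith [h5, h7, Real.exp_pos (-r)]
      -- bound on the sum term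
      have hl2K : (0:ℝ) < 1/(2*K) := by positivity
      set l : ℝ := min (s/(64*(n:ℝ)*K^2)) (1/(2*K)) with hldef
      have hl0 : 0 < l := lt_min (by positivity) hl2K
      have hlle : l ≤ 1/(2*K) := min_le_right _ _
      have hpos := aux_mgf_pos (μ := μ) (hXm 0) (hXnn 0) hX0int hK hmean' hGint hGle hl0.le hlle
      have hintm : ∀ i ∈ Finset.range m, Integrable (fun ω => Real.exp (l * X i ω)) μ :=
        fun i _ => hintexp i l hpos.1
      have hintsum : Integrable (fun ω => Real.exp (l * S ω)) μ := by
        rw [hSdef]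
        exact hindepX.integrable_exp_mul_sum hXm hintm
      have hcher := measure_ge_le_exp_mul_mgf (μ := μ) (X := S) (t := l)
        ((n:ℝ) - s/4) hl0.le hintsum
      have hmgfS : mgf S μ l ≤ Real.exp ((m:ℝ) * (l*β + 8*l^2*K^2)) := by
        rw [hSdef, hindepX.mgf_sum hXm]
        rw [Finset.prod_congr rfl (fun i _ => hmgf_eq i l), Finset.prod_const,
          Finset.card_range]
        calc (mgf (X 0) μ l)^m ≤ (Real.exp (l*β + 8*l^2*K^2))^m :=
              pow_le_pow_left₀ mgf_nonneg hpos.2 m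
          _ = Real.exp ((m:ℝ) * (l*β + 8*l^2*K^2)) := by rw [← Real.exp_nat_mul]
      have hm1 : (m:ℝ) ≤ β⁻¹*(n:ℝ) - s + 1 := by
        have h1 : ((km:ℕ):ℝ) ≤ β⁻¹*(n:ℝ) - s := Nat.floor_le hab
        rw [hmdef]
        push_cast
        linarith
      have hm2 : (m:ℝ) ≤ 2*(n:ℝ) := by
        have : β⁻¹*(n:ℝ) ≤ (n:ℝ) := hann
        linarith [hm1, hspos, hn1]
      have hβs4 : β ≤ s/4 := by linarith
      have hmβ : (m:ℝ)*β ≤ (n:ℝ) - s + s/4 := by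
        have h1 : (m:ℝ)*β ≤ (β⁻¹*(n:ℝ) - s + 1)*β := mul_le_mul_of_nonneg_right hm1 hβ.le
        have h2 : (β⁻¹*(n:ℝ) - s + 1)*β = (n:ℝ) - s*β + β := by field_simp
        have h3 : 0 ≤ s*(β-1) := mul_nonneg hspos.le (by linarith only [hβ1])
        linarith only [h1, h2, h3, hβs4]
      have harithB : -l*((n:ℝ) - s/4) + (m:ℝ)*(l*β + 8*l^2*K^2) ≤ -c * t^2 := by
        have hstep : -l*((n:ℝ) - s/4) + (m:ℝ)*(l*β + 8*l^2*K^2)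
            ≤ -(l*s)/2 + 16*(n:ℝ)*l^2*K^2 := by
          have t1 := mul_le_mul_of_nonneg_left hmβ hl0.le
          have t2 := mul_le_mul_of_nonneg_right hm2 (by positivity : (0:ℝ) ≤ 8*l^2*K^2)
          linarith only [t1, t2]
        rcases le_or_gt (s/(64*(n:ℝ)*K^2)) (1/(2*K)) with hcase | hcase
        · have hlval : l = s/(64*(n:ℝ)*K^2) := min_eq_left hcase
          rw [hlval] at hstep ⊢
          have e1 : -((s/(64*(n:ℝ)*K^2))*s)/2 + 16*(n:ℝ)*(s/(64*(n:ℝ)*K^2))^2*K^2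
              = -(s^2/(256*(n:ℝ)*K^2)) := by
            field_simp
            ring
          have e2 : s^2/(256*(n:ℝ)*K^2) = t^2/(256*K^2) := by
            rw [hs2]
            field_simp
          have e3 : c * t^2 ≤ t^2/(256*K^2) := by
            have := mul_le_mul_of_nonneg_right hc256 (sq_nonneg t)
            calc c * t^2 ≤ 1/(256*K^2) * t^2 := this
              _ = t^2/(256*K^2) := by ring
          rw [e1, e2] at hstep
          linarith only [hstep, e3]
        · have hlval : l = 1/(2*K) := min_eq_right hcase.le
          rw [hlval] at hstep ⊢
          have hs32 : 32*(n:ℝ)*K ≤ s := by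
            rw [div_lt_div_iff₀ (by positivity) (by positivity)] at hcase
            nlinarith only [hcase, hK]
          have e1 : -((1/(2*K))*s)/2 + 16*(n:ℝ)*(1/(2*K))^2*K^2 = -(s/(4*K)) + 4*(n:ℝ) := by
            field_simp
            ring
          have e2 : 4*(n:ℝ) ≤ s/(8*K) := by
            rw [le_div_iff₀ (by positivity)]
            linarith only [hs32]
          have e3 : c*t^2 ≤ s/(8*K) := by
            have u1 : c * t^2 ≤ 1/(8*K) * t^2 := mul_le_mul_of_nonneg_right hc8 (sq_nonneg t)
            have u2 : 1/(8*K) * t^2 ≤ 1/(8*K) * s := mul_le_mul_of_nonneg_left ht2s (by positivity)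
            calc c*t^2 ≤ 1/(8*K)*s := le_trans u1 u2
              _ = s/(8*K) := by ring
          have e4 : s/(8*K) + s/(8*K) = s/(4*K) := by ring
          rw [e1] at hstep
          linarith only [hstep, e2, e3, e4]
      have hfinalB : (μ {ω | (n:ℝ) - s/4 ≤ S ω}).toReal ≤ Real.exp (-c * t^2) := by
        refine hcher.trans ?_
        calc Real.exp (-l * ((n:ℝ) - s/4)) * mgf S μ l
            ≤ Real.exp (-l * ((n:ℝ) - s/4)) * Real.exp ((m:ℝ)*(l*β + 8*l^2*K^2)) :=
              mul_le_mul_of_nonneg_left hmgfS (Real.exp_pos _).le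
          _ = Real.exp (-l*((n:ℝ) - s/4) + (m:ℝ)*(l*β + 8*l^2*K^2)) := (Real.exp_add _ _).symm
          _ ≤ Real.exp (-c * t^2) := Real.exp_le_exp.2 harithB
      have hB2 : μ {ω | (n:ℝ) - s/4 ≤ S ω} ≤ ENNReal.ofReal (Real.exp (-c * t^2)) :=
        (ENNReal.le_ofReal_iff_toReal_le (measure_ne_top μ _) (Real.exp_pos _).le).2 hfinalB
      have hsubB : {ω | ((sSup {i : ℕ | σ i ω ≤ n} : ℕ) : ℝ) ≤ β⁻¹*(n:ℝ) - s}
          ⊆ {ω | s/4 ≤ ((σ 0 ω : ℕ):ℝ)} ∪ {ω | (n:ℝ) - s/4 ≤ S ω} := by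
        intro ω hω
        simp only [Set.mem_setOf_eq] at hω
        by_contra hcon
        simp only [Set.mem_union, Set.mem_setOf_eq, not_or, not_le] at hcon
        obtain ⟨h1, h2⟩ := hcon
        have hle : sSup {i : ℕ | σ i ω ≤ n} ≤ km := Nat.le_floor hω
        have hσgt : n < σ m ω := by
          by_contra h3
          push_neg at h3
          have hmem : m ∈ {i : ℕ | σ i ω ≤ n} := h3
          have hcs := le_csSup (hbdd ω) hmem
          omega
        have hid2 : (σ m ω : ℝ) = ((σ 0 ω : ℕ):ℝ) + S ω := by
          rw [hSdef, hsum m ω]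
          ring
        have hgt : (n:ℝ) < (σ m ω : ℝ) := by exact_mod_cast hσgt
        rw [hid2] at hgt
        linarith
      calc μ {ω | ((sSup {i : ℕ | σ i ω ≤ n} : ℕ) : ℝ) ≤ β⁻¹*(n:ℝ) - s}
          ≤ μ ({ω | s/4 ≤ ((σ 0 ω : ℕ):ℝ)} ∪ {ω | (n:ℝ) - s/4 ≤ S ω}) := measure_mono hsubB
        _ ≤ μ {ω | s/4 ≤ ((σ 0 ω : ℕ):ℝ)} + μ {ω | (n:ℝ) - s/4 ≤ S ω} := measure_union_le _ _
        _ ≤ ENNReal.ofReal (2*Real.exp (-c * t^2)) + ENNReal.ofReal (Real.exp (-c * t^2)) :=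
            add_le_add hB1 hB2
        _ = ENNReal.ofReal (3 * Real.exp (-c * t^2)) := by
            rw [← ENNReal.ofReal_add (by positivity) (by positivity)]
            ring_nf
    calc μ _ ≤ μ ({ω | β⁻¹*(n:ℝ) + s ≤ ((sSup {i : ℕ | σ i ω ≤ n} : ℕ) : ℝ)}
          ∪ {ω | ((sSup {i : ℕ | σ i ω ≤ n} : ℕ) : ℝ) ≤ β⁻¹*(n:ℝ) - s}) := measure_mono hEsub
      _ ≤ μ {ω | β⁻¹*(n:ℝ) + s ≤ ((sSup {i : ℕ | σ i ω ≤ n} : ℕ) : ℝ)}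
          + μ {ω | ((sSup {i : ℕ | σ i ω ≤ n} : ℕ) : ℝ) ≤ β⁻¹*(n:ℝ) - s} := measure_union_le _ _
      _ ≤ ENNReal.ofReal (Real.exp (-c * t^2)) + ENNReal.ofReal (3 * Real.exp (-c * t^2)) :=
          add_le_add hA hB
      _ = ENNReal.ofReal (4 * Real.exp (-c * t^2)) := by
          rw [← ENNReal.ofReal_add (by positivity) (by positivity)]
          ring_nf
      _ ≤ ENNReal.ofReal (4 * Real.exp (c * (4*β + 4*K)^2) * Real.exp (-c * t^2)) := by
          apply ENNReal.ofReal_le_ofReal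
          have h1 : (1:ℝ) ≤ Real.exp (c * (4*β + 4*K)^2) := Real.one_le_exp (by positivity)
          linarith only [mul_le_mul_of_nonneg_right h1 (Real.exp_pos (-c * t^2)).le]
end
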